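/- arXiv:2312.08602 — 7 statements merged into one kernel-verified Lean document; each statement's English description precedes it below -/
import Mathlib

section
/- For any S-tight level ranking f on a nonempty finite set S, the rank of f is odd, and the number of states mapped to odd values is at least (rank(f)+1)/2; consequently |S| ≥ (rank(f)+1)/2. -/
/-- `f` is an `S`-tight level ranking: for some `n` with `1 ≤ n ≤ |S|`,
`f` maps `S` into `{0, 1, …, 2n−1}` and onto the odd numbers `{1, 3, …, 2n−1}`. -/
def Tight {Q : Type*} (S : Finset Q) (f : Q → ℕ) : Prop :=
  ∃ n : ℕ, 1 ≤ n ∧ n ≤ S.card ∧ (∀ q ∈ S, f q ≤ 2 * n - 1) ∧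
    (∀ k : ℕ, Odd k → k ≤ 2 * n - 1 → ∃ q ∈ S, f q = k)

/-- The rank of a ranking function on `S` is its maximum value on `S`. -/
def rank {Q : Type*} (S : Finset Q) (f : Q → ℕ) : ℕ := S.sup f

section

variable {Q : Type*} {S : Finset Q} {f : Q → ℕ}

lemma rank_eq_of_le_of_mem {m : ℕ} (hle : ∀ q ∈ S, f q ≤ m) (hm : ∃ q ∈ S, f q = m) :
    rank S f = m := by
  obtain ⟨q, hq, rfl⟩ := hm
  exact le_antisymm (Finset.sup_le hle) (Finset.le_sup hq)

lemma le_card_filter_odd_of_forall_lt {n : ℕ} (hodd : ∀ i < n, ∃ q ∈ S, f q = 2 * i + 1) :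
    n ≤ (S.filter fun q => Odd (f q)).card := by
  calc n = (Finset.range n).card := (Finset.card_range n).symm
    _ ≤ (S.filter fun q => Odd (f q)).card := by
      refine Finset.card_le_card_of_surjOn (fun q => f q / 2) fun i hi => ?_
      obtain ⟨q, hq, hfq⟩ := hodd i (Finset.mem_range.mp hi)
      refine ⟨q, Finset.mem_filter.mpr ⟨hq, hfq ▸ odd_two_mul_add_one i⟩, ?_⟩
      simp only [hfq]
      omega

namespace Tight

theorem odd_rank (h : Tight S f) : Odd (rank S f) := by
  obtain ⟨n, hn, -, hle, hsurj⟩ := h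
  have hodd : Odd (2 * n - 1) := ⟨n - 1, by omega⟩
  rw [rank_eq_of_le_of_mem hle (hsurj _ hodd le_rfl)]
  exact hodd

theorem rank_add_one_div_two_le_card_filter_odd (h : Tight S f) :
    (rank S f + 1) / 2 ≤ (S.filter fun q => Odd (f q)).card := by
  obtain ⟨n, hn, -, hle, hsurj⟩ := h
  have hrank : rank S f = 2 * n - 1 :=
    rank_eq_of_le_of_mem hle (hsurj _ ⟨n - 1, by omega⟩ le_rfl)
  have hn_le : n ≤ (S.filter fun q => Odd (f q)).card :=
    le_card_filter_odd_of_forall_lt fun i hi =>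
      hsurj (2 * i + 1) (odd_two_mul_add_one i) (by omega)
  rw [hrank]
  omega

end Tight

end

theorem stmt2_general {Q : Type*} (S : Finset Q) (f : Q → ℕ)
    (h : Tight S f) :
    Odd (rank S f) ∧
    (rank S f + 1) / 2 ≤ (S.filter fun q => Odd (f q)).card ∧
    (rank S f + 1) / 2 ≤ S.card :=
  ⟨h.odd_rank, h.rank_add_one_div_two_le_card_filter_odd,
    h.rank_add_one_div_two_le_card_filter_odd.trans (Finset.card_filter_le _ _)⟩

theorem stmt2 {Q : Type*} (S : Finset Q) (f : Q → ℕ)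
    (hS : S.Nonempty) (h : Tight S f) :
    Odd (rank S f) ∧
    (rank S f + 1) / 2 ≤ (S.filter fun q => Odd (f q)).card ∧
    (rank S f + 1) / 2 ≤ S.card :=
  stmt2_general S f h
end

section
/- The collection automaton accepts a word if and only if all promises are satisfied: an ω-word ϖ = (σ₀,q₀)(σ₁,q₁)(σ₂,q₂)... over alphabet Σ × Q is accepted by the collection UCA C (i.e., C has no rejecting run on ϖ) if and only if for every i ∈ ℕ, the suffix word σᵢσᵢ₊₁... is in the language of the UCA A with initial state qᵢ. -/
/-- `ρ` is a run of the automaton with transitions `δ` from `q` on word `w`. -/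
def IsRun {A Q : Type*} (δ : Q → A → Set Q) (q : Q) (w : ℕ → A) (ρ : ℕ → Q) : Prop :=
  ρ 0 = q ∧ ∀ i, ρ (i + 1) ∈ δ (ρ i) (w i)

/-- `ρ` is rejecting: it takes rejecting transitions (given by `γ`) infinitely often. -/
def RejRun {A Q : Type*} (γ : Q → A → Set Q) (w : ℕ → A) (ρ : ℕ → Q) : Prop :=
  ∀ N : ℕ, ∃ i ≥ N, ρ (i + 1) ∈ γ (ρ i) (w i)

/-- The language of the UCA `(δ, γ)` from state `q`: the words having no rejecting run. -/
def UCALang {A Q : Type*} (δ γ : Q → A → Set Q) (q : Q) (w : ℕ → A) : Prop :=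
  ∀ ρ : ℕ → Q, IsRun δ q w ρ → ¬ RejRun γ w ρ

/-- Transitions of the collection automaton over `A × Q`, with fresh initial state `none`. -/
def collδ {A Q : Type*} (δ : Q → A → Set Q) : Option Q → A × Q → Set (Option Q)
  | some q, (σ, _) => some '' δ q σ
  | none, (σ, q) => insert none (some '' δ q σ)

/-- Rejecting transitions of the collection automaton. -/
def collγ {A Q : Type*} (δ γ : Q → A → Set Q) : Option Q → A × Q → Set (Option Q)
  | some q, (σ, _) => some '' γ q σ
  | none, (σ, q) => some '' δ q σ

/-! A run of the collection automaton waits in the fresh state for a while; when it leaves it at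
position `i`, it continues as a run of `A` from the promised state `qᵢ` on the suffix from `i`, and
every such run of `A` arises this way. Waiting forever takes no rejecting transition, so rejecting
runs of the collection automaton correspond exactly to rejecting runs of `A` from some `qᵢ` on the
suffix from `i`. -/

namespace Collection

variable {A Q : Type*} (δ γ : Q → A → Set Q)

lemma none_mem_collδ_iff (s : Option Q) (p : A × Q) : none ∈ collδ δ s p ↔ s = none := by
  rcases s with _ | q <;> simp [collδ]

/-- From the fresh state, `Option.getD` reads the promised state off the letter. -/
lemma some_mem_collδ_iff (s : Option Q) (σ : A) (q q' : Q) :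
    some q' ∈ collδ δ s (σ, q) ↔ q' ∈ δ (s.getD q) σ := by
  rcases s with _ | p <;> simp [collδ]

lemma none_notMem_collγ (s : Option Q) (p : A × Q) : none ∉ collγ δ γ s p := by
  rcases s with _ | q <;> simp [collγ]

lemma some_mem_collγ_some_iff (p : Q) (σ : A) (q q' : Q) :
    some q' ∈ collγ δ γ (some p) (σ, q) ↔ q' ∈ γ p σ := by
  simp [collγ]

variable {δ γ}

lemma exists_last_none_of_rejRun {w : ℕ → A × Q} {ρ : ℕ → Option Q}
    (hρ : IsRun (collδ δ) none w ρ) (hrej : RejRun (collγ δ γ) w ρ) :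
    ∃ i, ρ i = none ∧ ∀ k, ρ (i + k + 1) ≠ none := by
  classical
  have hex : ∃ n, ρ (n + 1) ≠ none := by
    obtain ⟨j, -, hj⟩ := hrej 0
    exact ⟨j, fun h => none_notMem_collγ δ γ _ _ (h ▸ hj)⟩
  refine ⟨Nat.find hex, ?_, fun k => ?_⟩
  · rcases h : Nat.find hex with _ | n
    · exact hρ.1
    · exact not_not.mp (Nat.find_min hex (h ▸ n.lt_succ_self))
  · induction k with
    | zero => exact Nat.find_spec hex
    | succ k ih =>
      intro h
      rw [← add_assoc] at h
      have hstep := hρ.2 (Nat.find hex + k + 1)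
      rw [h, none_mem_collδ_iff] at hstep
      exact ih hstep

/-- The witness is the `Q`-part of the run after it leaves the fresh state, started at the
promise `(w i).2` read at the last fresh position `i`. -/
lemma exists_rejRun_suffix_of_rejRun_coll {w : ℕ → A × Q} {ρ : ℕ → Option Q}
    (hρ : IsRun (collδ δ) none w ρ) (hrej : RejRun (collγ δ γ) w ρ) :
    ∃ i ρA, IsRun δ (w i).2 (fun k => (w (i + k)).1) ρA ∧
      RejRun γ (fun k => (w (i + k)).1) ρA := by
  obtain ⟨i, hi, hsome⟩ := exists_last_none_of_rejRun hρ hrej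
  refine ⟨i, fun k => (ρ (i + k)).getD (w i).2, ⟨by simp [hi], fun k => ?_⟩, fun N => ?_⟩
  · have hcur : (ρ (i + k)).getD (w (i + k)).2 = (ρ (i + k)).getD (w i).2 := by
      rcases k with _ | k
      · simp [hi]
      · obtain ⟨p, hp⟩ := Option.ne_none_iff_exists'.mp (hsome k)
        rw [← add_assoc, hp]; rfl
    obtain ⟨q', hq'⟩ := Option.ne_none_iff_exists'.mp (hsome k)
    have hstep := hρ.2 (i + k)
    rw [hq'] at hstep
    show (ρ (i + (k + 1))).getD (w i).2 ∈ δ ((ρ (i + k)).getD (w i).2) (w (i + k)).1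
    rw [← hcur, ← add_assoc, hq']
    exact (some_mem_collδ_iff δ _ _ _ _).mp hstep
  · obtain ⟨j, hj, hjrej⟩ := hrej (i + N + 1)
    obtain ⟨k, rfl⟩ : ∃ k, j = i + k + 1 := ⟨j - i - 1, by omega⟩
    obtain ⟨p, hp⟩ := Option.ne_none_iff_exists'.mp (hsome k)
    obtain ⟨q', hq'⟩ := Option.ne_none_iff_exists'.mp (hsome (k + 1))
    rw [← add_assoc] at hq'
    rw [hp, hq'] at hjrej
    refine ⟨k + 1, by omega, ?_⟩
    show (ρ (i + (k + 1 + 1))).getD (w i).2 ∈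
      γ ((ρ (i + (k + 1))).getD (w i).2) (w (i + (k + 1))).1
    simp only [← add_assoc, hp, hq', Option.getD_some]
    exact (some_mem_collγ_some_iff δ γ _ _ _ _).mp hjrej

/-- The collection automaton stays in the fresh state up to position `i` and then follows `ρA`. -/
lemma exists_rejRun_coll_of_rejRun_suffix {w : ℕ → A × Q} {i : ℕ} {ρA : ℕ → Q}
    (hρA : IsRun δ (w i).2 (fun k => (w (i + k)).1) ρA)
    (hrej : RejRun γ (fun k => (w (i + k)).1) ρA) :
    ∃ ρ, IsRun (collδ δ) none w ρ ∧ RejRun (collγ δ γ) w ρ := by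
  set ρ : ℕ → Option Q := fun k => if k ≤ i then none else some (ρA (k - i)) with hρ
  have hafter : ∀ k, ρ (i + k + 1) = some (ρA (k + 1)) := fun k => by
    simp only [hρ]; rw [if_neg (by omega)]; congr 2; omega
  refine ⟨ρ, ⟨by simp [hρ], fun j => ?_⟩, fun N => ?_⟩
  · rcases lt_or_ge j i with hj | hj
    · simp only [hρ, if_pos hj.le, if_pos (Nat.succ_le_of_lt hj), none_mem_collδ_iff]
    · obtain ⟨k, rfl⟩ := Nat.exists_eq_add_of_le hj
      have hcur : (ρ (i + k)).getD (w (i + k)).2 = ρA k := by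
        rcases k with _ | k
        · simp [hρ, hρA.1]
        · rw [← add_assoc, hafter]; rfl
      rw [hafter, ← Prod.mk.eta (p := w (i + k)), some_mem_collδ_iff, hcur]
      exact hρA.2 k
  · obtain ⟨k, hk, hkrej⟩ := hrej (N + 1)
    obtain ⟨k, rfl⟩ : ∃ m, k = m + 1 := ⟨k - 1, by omega⟩
    refine ⟨i + k + 1, by omega, ?_⟩
    rw [show i + k + 1 + 1 = i + (k + 1) + 1 by ring, hafter, hafter,
      ← Prod.mk.eta (p := w (i + k + 1)), some_mem_collγ_some_iff]
    simpa [← add_assoc] using hkrej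

end Collection

open Collection in
theorem stmt3_general {A Q : Type*} (δ γ : Q → A → Set Q)
    (w : ℕ → A × Q) :
    UCALang (collδ δ) (collγ δ γ) none w ↔
      ∀ i : ℕ, UCALang δ γ (w i).2 (fun k => (w (i + k)).1) := by
  constructor
  · intro hacc i ρA hρA hrej
    obtain ⟨ρ, hρ, hρrej⟩ := exists_rejRun_coll_of_rejRun_suffix hρA hrej
    exact hacc ρ hρ hρrej
  · intro hall ρ hρ hrej
    obtain ⟨i, ρA, hρA, hρArej⟩ := exists_rejRun_suffix_of_rejRun_coll hρ hrej
    exact hall i ρA hρA hρArej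

theorem stmt3 {A Q : Type*} (δ γ : Q → A → Set Q)
    (hγ : ∀ q σ, γ q σ ⊆ δ q σ) (w : ℕ → A × Q) :
    UCALang (collδ δ) (collγ δ γ) none w ↔
      ∀ i : ℕ, UCALang δ γ (w i).2 (fun k => (w (i + k)).1) :=
  stmt3_general δ γ w
end

section
/- There exists a strongly limit-deterministic nondeterministic Büchi automaton that accepts every ω-word over its alphabet but is not good-for-MDPs. Concretely, the 4-state NBA over alphabet {p, ¬p} with states q₀,q₁,q₂,q₃, nondeterministic non-accepting transitions q₀→{q₀,q₁,q₂} on every letter, q₁→q₃ on p, q₂→q₃ on ¬p, and an accepting self-loop on q₃, accepts every ω-word; moreover, any accepting run must, from state q₀, correctly predict whether the letter after next is p, so no strategy of resolving nondeterminism based only on the prefix read so far yields an accepting run on all words (it fails on some word produced by an adversarial/random environment). -/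
/-- `ρ` is accepting: it takes accepting transitions (given by `γ`) infinitely often. -/
def AccRun {A Q : Type*} (γ : Q → A → Set Q) (w : ℕ → A) (ρ : ℕ → Q) : Prop :=
  ∀ N : ℕ, ∃ i ≥ N, ρ (i + 1) ∈ γ (ρ i) (w i)

/-- Transitions of the 4-state NBA over `Bool` (`true` = `p`):
`q₀ → {q₀,q₁,q₂}` on every letter, `q₁ → q₃` on `p`, `q₂ → q₃` on `¬p`,
self-loop on `q₃`. -/
def nδ (q : Fin 4) (b : Bool) : Set (Fin 4) :=
  if q = 0 then {0, 1, 2}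
  else if q = 1 then (if b then {3} else ∅)
  else if q = 2 then (if b then ∅ else {3})
  else {3}

/-- Accepting transitions: only the self-loop on `q₃`. -/
def nγ (q : Fin 4) (_ : Bool) : Set (Fin 4) :=
  if q = 3 then {3} else ∅

section

variable {A Q : Type*}

def IsStronglyLimitDeterministic (δ γ : Q → A → Set Q) : Prop :=
  ∃ Q1 Q2 : Set Q, (∀ q, q ∈ Q1 ↔ q ∉ Q2) ∧
    (∀ q ∈ Q1, ∀ b, (δ q b ∩ Q1).Subsingleton) ∧
    (∀ q ∈ Q2, ∀ b, δ q b ⊆ Q2 ∧ (δ q b).Subsingleton) ∧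
    (∀ q b, γ q b ⊆ Q2)

def IsUniversal (δ γ : Q → A → Set Q) (q₀ : Q) : Prop :=
  ∀ w : ℕ → A, ∃ ρ : ℕ → Q, IsRun δ q₀ w ρ ∧ AccRun γ w ρ

def HasPrefixResolver (δ γ : Q → A → Set Q) (q₀ : Q) : Prop :=
  ∃ str : List A → Q, ∀ w : ℕ → A,
    IsRun δ q₀ w (fun n => str (List.ofFn fun i : Fin n => w i)) ∧
    AccRun γ w (fun n => str (List.ofFn fun i : Fin n => w i))

def adaptiveWord (f : List A → A) (n : ℕ) : A :=
  f (List.ofFn fun i : Fin n => adaptiveWord f i)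
termination_by n
decreasing_by exact i.isLt

theorem adaptiveWord_apply (f : List A → A) (n : ℕ) :
    adaptiveWord f n = f (List.ofFn fun i : Fin n => adaptiveWord f i) := by
  rw [adaptiveWord]

end

theorem nδ_zero (b : Bool) : nδ 0 b = {0, 1, 2} := rfl

theorem nδ_one_false : nδ 1 false = ∅ := rfl

theorem nδ_two_true : nδ 2 true = ∅ := rfl

theorem nδ_subset_three {q : Fin 4} (hq : q ≠ 0) (b : Bool) : nδ q b ⊆ {3} := by
  fin_cases q <;> cases b <;> simp_all [nδ]

theorem nγ_subset_three (q : Fin 4) (b : Bool) : nγ q b ⊆ {3} := by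
  unfold nγ; split_ifs <;> simp

theorem nγ_zero (b : Bool) : nγ 0 b = ∅ := rfl

theorem nδ_isStronglyLimitDeterministic : IsStronglyLimitDeterministic nδ nγ := by
  have three_mem : (3 : Fin 4) ∈ {q : Fin 4 | q ≠ 0} := by decide
  refine ⟨{0}, {q | q ≠ 0}, fun q => by simp, ?_, ?_, ?_⟩
  · exact fun _ _ _ => Set.subsingleton_singleton.anti Set.inter_subset_right
  · intro q hq b
    exact ⟨(nδ_subset_three hq b).trans (Set.singleton_subset_iff.2 three_mem),
      Set.subsingleton_singleton.anti (nδ_subset_three hq b)⟩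
  · exact fun q b => (nγ_subset_three q b).trans (Set.singleton_subset_iff.2 three_mem)

def guessingRun (w : ℕ → Bool) : ℕ → Fin 4
  | 0 => 0
  | 1 => if w 1 then 1 else 2
  | _ + 2 => 3

theorem isRun_guessingRun (w : ℕ → Bool) : IsRun nδ 0 w (guessingRun w) := by
  refine ⟨rfl, fun i => ?_⟩
  match i with
  | 0 => cases h : w 1 <;> simp [guessingRun, nδ_zero, h]
  | 1 => cases h : w 1 <;> simp [guessingRun, nδ, h]
  | _ + 2 => simp [guessingRun, nδ]

theorem accRun_guessingRun (w : ℕ → Bool) : AccRun nγ w (guessingRun w) :=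
  fun N => ⟨N + 2, by omega, by simp [guessingRun, nγ]⟩

theorem nδ_isUniversal : IsUniversal nδ nγ 0 :=
  fun w => ⟨guessingRun w, isRun_guessingRun w, accRun_guessingRun w⟩

namespace IsRun

variable {q : Fin 4} {w : ℕ → Bool} {ρ : ℕ → Fin 4}

theorem letter_eq_true_of_eq_one (hρ : IsRun nδ q w ρ) {n : ℕ} (h : ρ n = 1) : w n = true := by
  by_contra hw
  have hstep := hρ.2 n
  rwa [h, Bool.eq_false_iff.2 hw, nδ_one_false] at hstep

theorem letter_eq_false_of_eq_two (hρ : IsRun nδ q w ρ) {n : ℕ} (h : ρ n = 2) :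
    w n = false := by
  by_contra hw
  have hstep := hρ.2 n
  rwa [h, Bool.eq_true_of_not_eq_false hw, nδ_two_true] at hstep

theorem eq_zero_of_avoids_one_two (hρ : IsRun nδ 0 w ρ) (h : ∀ n, ρ n ≠ 1 ∧ ρ n ≠ 2) (n : ℕ) :
    ρ n = 0 := by
  induction n with
  | zero => exact hρ.1
  | succ n ih =>
    have hstep := hρ.2 n
    rw [ih, nδ_zero] at hstep
    simpa [h (n + 1)] using hstep

end IsRun

theorem not_accRun_of_forall_eq_zero {w : ℕ → Bool} {ρ : ℕ → Fin 4} (h : ∀ n, ρ n = 0) :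
    ¬ AccRun nγ w ρ := by
  intro hacc
  obtain ⟨i, -, hi⟩ := hacc 0
  simp [h, nγ_zero] at hi

theorem not_hasPrefixResolver_nδ : ¬ HasPrefixResolver nδ nγ 0 := by
  rintro ⟨str, hstr⟩
  -- The environment plays `p` exactly when the strategy sits in `q₂`, so `q₁` and `q₂` are dead ends.
  set w := adaptiveWord fun u => decide (str u = 2)
  set ρ : ℕ → Fin 4 := fun n => str (List.ofFn fun i : Fin n => w i)
  have hw (n : ℕ) : w n = decide (ρ n = 2) := adaptiveWord_apply _ n
  obtain ⟨hrun, hacc⟩ := hstr w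
  have avoids (n : ℕ) : ρ n ≠ 1 ∧ ρ n ≠ 2 := by
    constructor
    · intro h1
      simpa [hw, h1] using hrun.letter_eq_true_of_eq_one h1
    · intro h2
      simpa [hw, h2] using hrun.letter_eq_false_of_eq_two h2
  exact not_accRun_of_forall_eq_zero (hrun.eq_zero_of_avoids_one_two avoids) hacc

theorem stmt4 :
    -- the automaton is strongly limit deterministic
    (∃ Q1 Q2 : Set (Fin 4), (∀ q, q ∈ Q1 ↔ q ∉ Q2) ∧
      (∀ q ∈ Q1, ∀ b, (nδ q b ∩ Q1).Subsingleton) ∧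
      (∀ q ∈ Q2, ∀ b, nδ q b ⊆ Q2 ∧ (nδ q b).Subsingleton) ∧
      (∀ q b, nγ q b ⊆ Q2)) ∧
    -- it accepts every ω-word
    (∀ w : ℕ → Bool, ∃ ρ : ℕ → Fin 4, IsRun nδ 0 w ρ ∧ AccRun nγ w ρ) ∧
    -- but no prefix-based resolution strategy yields an accepting run on all words
    ¬ ∃ str : List Bool → Fin 4, ∀ w : ℕ → Bool,
        IsRun nδ 0 w (fun n => str (List.ofFn fun i : Fin n => w i)) ∧
        AccRun nγ w (fun n => str (List.ofFn fun i : Fin n => w i)) := by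
  exact ⟨nδ_isStronglyLimitDeterministic, nδ_isUniversal, not_hasPrefixResolver_nδ⟩
end

section
/- If an ω-word ϖ over Σ × Q is rejected by the collection automaton C, then there exists an index i and a state qᵢ (the i-th promise component of ϖ) such that the suffix σᵢσᵢ₊₁... has a rejecting run in the UCA A starting from qᵢ; i.e., some individual promise is violated. -/
/-! The run of the collection automaton stays in the fresh state `none` up to some last index `i`
(it cannot return to `none`, and it must leave it to reject). From `i` on it is a run of the UCA
started in the promised state `(w i).2`, and since every later state lies in `Q`, its rejecting
transitions are rejecting transitions of the UCA. -/

section CollectionAutomaton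

variable {A Q : Type*} (δ γ : Q → A → Set Q)

@[simp]
theorem none_mem_collδ_iff {s : Option Q} {a : A × Q} : none ∈ collδ δ s a ↔ s = none := by
  rcases s with _ | q <;> simp [collδ]

@[simp]
theorem some_mem_collδ_iff {s : Option Q} {a : A × Q} {q : Q} :
    some q ∈ collδ δ s a ↔ q ∈ δ (s.getD a.2) a.1 := by
  rcases s with _ | p <;> simp [collδ]

@[simp]
theorem none_notMem_collγ {s : Option Q} {a : A × Q} : none ∉ collγ δ γ s a := by
  rcases s with _ | p <;> simp [collγ]

@[simp]
theorem some_mem_collγ_some_iff {p q : Q} {a : A × Q} :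
    some q ∈ collγ δ γ (some p) a ↔ q ∈ γ p a.1 := by
  simp [collγ]

variable {δ γ} {w : ℕ → A × Q} {s : Option Q} {ρ : ℕ → Option Q}

theorem IsRun.ne_none_of_le (hρ : IsRun (collδ δ) s w ρ) {m n : ℕ} (hm : ρ m ≠ none)
    (hmn : m ≤ n) : ρ n ≠ none := by
  induction n, hmn using Nat.le_induction with
  | base => exact hm
  | succ n _ ih => exact fun hn => ih ((none_mem_collδ_iff δ).mp (hn ▸ hρ.2 n))

theorem RejRun.exists_succ_ne_none (hR : RejRun (collγ δ γ) w ρ) : ∃ n, ρ (n + 1) ≠ none := by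
  obtain ⟨n, -, hn⟩ := hR 0
  exact ⟨n, fun h => none_notMem_collγ δ γ (h ▸ hn)⟩

theorem IsRun.exists_last_none (hρ : IsRun (collδ δ) none w ρ) (hR : RejRun (collγ δ γ) w ρ) :
    ∃ i, ρ i = none ∧ ∀ n > i, ρ n ≠ none := by
  classical
  have hex := hR.exists_succ_ne_none
  refine ⟨Nat.find hex, ?_, fun n hn => hρ.ne_none_of_le (Nat.find_spec hex) hn⟩
  rcases h : Nat.find hex with _ | m
  · exact hρ.1
  · simpa using Nat.find_min hex (h ▸ Nat.lt_succ_self m)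

/-- Projection of the tail of a run of the collection automaton to `Q`, reading the fresh state
as the promised state of the current letter. -/
def projTail (w : ℕ → A × Q) (ρ : ℕ → Option Q) (i : ℕ) : ℕ → Q :=
  fun k => (ρ (i + k)).getD (w (i + k)).2

theorem IsRun.projTail (hρ : IsRun (collδ δ) s w ρ) {i : ℕ} (hi : ∀ n > i, ρ n ≠ none) :
    IsRun δ ((ρ i).getD (w i).2) (fun k => (w (i + k)).1) (projTail w ρ i) := by
  refine ⟨rfl, fun k => ?_⟩
  obtain ⟨p, hp⟩ := Option.ne_none_iff_exists'.mp (hi (i + k + 1) (by omega))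
  have hstep := hρ.2 (i + k)
  rw [hp, some_mem_collδ_iff] at hstep
  simpa [_root_.projTail, ← Nat.add_assoc, hp] using hstep

theorem RejRun.projTail (hR : RejRun (collγ δ γ) w ρ) {i : ℕ} (hi : ∀ n > i, ρ n ≠ none) :
    RejRun γ (fun k => (w (i + k)).1) (projTail w ρ i) := by
  intro N
  obtain ⟨j, hj, hrej⟩ := hR (i + N + 1)
  obtain ⟨k, rfl⟩ : ∃ k, j = i + k := ⟨j - i, by omega⟩
  obtain ⟨p, hp⟩ := Option.ne_none_iff_exists'.mp (hi (i + k) (by omega))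
  obtain ⟨p', hp'⟩ := Option.ne_none_iff_exists'.mp (hi (i + k + 1) (by omega))
  rw [hp, hp', some_mem_collγ_some_iff] at hrej
  exact ⟨k, by omega, by simpa [_root_.projTail, ← Nat.add_assoc, hp, hp'] using hrej⟩

end CollectionAutomaton

theorem stmt5_general {A Q : Type*} (δ γ : Q → A → Set Q)
    (w : ℕ → A × Q)
    (hrej : ∃ ρ : ℕ → Option Q, IsRun (collδ δ) none w ρ ∧ RejRun (collγ δ γ) w ρ) :
    ∃ i : ℕ, ∃ ρ : ℕ → Q, IsRun δ (w i).2 (fun k => (w (i + k)).1) ρ ∧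
      RejRun γ (fun k => (w (i + k)).1) ρ := by
  obtain ⟨ρ, hρ, hR⟩ := hrej
  obtain ⟨i, hi, hafter⟩ := hρ.exists_last_none hR
  have hrun := hρ.projTail hafter
  rw [hi, Option.getD_none] at hrun
  exact ⟨i, projTail w ρ i, hrun, hR.projTail hafter⟩

theorem stmt5 {A Q : Type*} (δ γ : Q → A → Set Q)
    (hγ : ∀ q σ, γ q σ ⊆ δ q σ) (w : ℕ → A × Q)
    (hrej : ∃ ρ : ℕ → Option Q, IsRun (collδ δ) none w ρ ∧ RejRun (collγ δ γ) w ρ) :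
    ∃ i : ℕ, ∃ ρ : ℕ → Q, IsRun δ (w i).2 (fun k => (w (i + k)).1) ρ ∧
      RejRun γ (fun k => (w (i + k)).1) ρ :=
  stmt5_general δ γ w hrej
end

section
/- The language of the rank-based NBA construction C is contained in the language of the source UCA A: every ω-word accepted by C (having a run visiting accepting transitions infinitely often) has no rejecting run in the UCA A, in the special case where A has only one rank available (rank 1), i.e., where C performs a breakpoint construction checking that all runs of A visit rejecting transitions only finitely often. In particular, if every run of C on w that eventually leaves the subset-construction phase reaches an empty obligation set infinitely often, then no run of A on w takes γ-transitions infinitely often. -/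
section SuccClosed

variable {A Q : Type*} (δ : Q → A → Set Q) (w : ℕ → A)

def IsSuccClosed (T : ℕ → Set Q) : Prop :=
  ∀ n, ∀ q ∈ T n, δ q (w n) ⊆ T (n + 1)

variable {δ w}

theorem isSuccClosed_of_superset_biUnion {T : ℕ → Set Q}
    (hT : ∀ n, ⋃ q ∈ T n, δ q (w n) ⊆ T (n + 1)) : IsSuccClosed δ w T :=
  fun n _ hq => (Set.subset_biUnion_of_mem hq).trans (hT n)

theorem IsSuccClosed.mem_of_le {T : ℕ → Set Q} (hT : IsSuccClosed δ w T) {ρ : ℕ → Q}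
    (hρ : ∀ i, ρ (i + 1) ∈ δ (ρ i) (w i)) {k m : ℕ} (hkm : k ≤ m) (hk : ρ k ∈ T k) :
    ρ m ∈ T m := by
  induction m, hkm using Nat.le_induction with
  | base => exact hk
  | succ m _ ih => exact hT m _ ih (hρ m)

end SuccClosed

theorem stmt8_general {A Q : Type*} (δ γ : Q → A → Set Q)
    (q0 : Q) (w : ℕ → A) (S O : ℕ → Set Q)
    (hS0 : S 0 = {q0})
    (hS : ∀ n, S (n + 1) = ⋃ q ∈ S n, δ q (w n))
    (hO : ∀ n, O (n + 1) = (⋃ q ∈ O n, δ q (w n)) ∪ ⋃ q ∈ S n, γ q (w n))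
    (hbp : ∀ N : ℕ, ∃ n ≥ N, O n = ∅) :
    ∀ ρ : ℕ → Q, IsRun δ q0 w ρ →
      ¬ (∀ N : ℕ, ∃ i ≥ N, ρ (i + 1) ∈ γ (ρ i) (w i)) := by
  rintro ρ ⟨hρ0, hρ⟩ hinf
  have hSclosed : IsSuccClosed δ w S :=
    isSuccClosed_of_superset_biUnion fun n => (hS n).ge
  have hOclosed : IsSuccClosed δ w O :=
    isSuccClosed_of_superset_biUnion fun n => (hO n).symm ▸ Set.subset_union_left
  obtain ⟨i, -, hi⟩ := hinf 0
  have hρS : ρ i ∈ S i := hSclosed.mem_of_le hρ i.zero_le (by simp [hρ0, hS0])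
  have hρO : ρ (i + 1) ∈ O (i + 1) := by
    rw [hO i]
    exact Or.inr (Set.mem_biUnion hρS hi)
  obtain ⟨n, hn, hempty⟩ := hbp (i + 1)
  simpa [hempty] using hOclosed.mem_of_le hρ hn hρO

/-- Breakpoint construction for the rank-1 special case: if the obligation set `O`
of the deterministic breakpoint automaton empties infinitely often (infinitely many
breakpoints, i.e. the run of `C` is accepting), then no run of the UCA `A` on `w`
takes rejecting transitions infinitely often, i.e. `w ∈ L(A)`. -/
theorem stmt8 {A Q : Type*} (δ γ : Q → A → Set Q)
    (hγ : ∀ q σ, γ q σ ⊆ δ q σ)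
    (q0 : Q) (w : ℕ → A) (S O : ℕ → Set Q)
    (hS0 : S 0 = {q0}) (hO0 : O 0 = ∅)
    (hS : ∀ n, S (n + 1) = ⋃ q ∈ S n, δ q (w n))
    (hO : ∀ n, O (n + 1) = (⋃ q ∈ O n, δ q (w n)) ∪ ⋃ q ∈ S n, γ q (w n))
    (hbp : ∀ N : ℕ, ∃ n ≥ N, O n = ∅) :
    ∀ ρ : ℕ → Q, IsRun δ q0 w ρ →
      ¬ (∀ N : ℕ, ∃ i ≥ N, ρ (i + 1) ∈ γ (ρ i) (w i)) :=
  stmt8_general δ γ q0 w S O hS0 hS hO hbp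
end

section
/- A history tree for an automaton with n states has at most n nodes: if ⟨T, l⟩ is a history tree with labels in the nonempty subsets of a finite set Q, then |T| ≤ |Q|. -/
/-- A set of sequences is prefix closed if every prefix of a member is a member. -/
def PrefixClosed (T : Set (List ℕ)) : Prop :=
  ∀ s t : List ℕ, s <+: t → t ∈ T → s ∈ T

/-- A set of sequences is order closed if any sequence that is pointwise below
an initial segment of a member is also a member. -/
def OrderClosed (T : Set (List ℕ)) : Prop :=
  ∀ s t : List ℕ, t ∈ T → s.length ≤ t.length →
    (∀ i : ℕ, i < s.length → s.getD i 0 ≤ t.getD i 0) → s ∈ T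

/-- An ordered tree is a finite, prefix- and order-closed set of sequences of naturals. -/
def OrderedTree (T : Set (List ℕ)) : Prop :=
  T.Finite ∧ PrefixClosed T ∧ OrderClosed T

/-- The degree of a node `τ`: the number of its children in `T`. -/
noncomputable def deg (T : Set (List ℕ)) (τ : List ℕ) : ℕ :=
  {i : ℕ | τ ++ [i] ∈ T}.ncard

/-- A history tree for an automaton with state set `Q`: a finite ordered tree with
nonempty labels such that the union of the children's labels is a proper subset of
the parent's label, and the labels of distinct children of a node are disjoint. -/
def HistoryTree {Q : Type*} (T : Set (List ℕ)) (l : List ℕ → Set Q) : Prop :=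
  OrderedTree T ∧ T.Nonempty ∧
  (∀ τ ∈ T, (l τ).Nonempty) ∧
  (∀ τ ∈ T, (⋃ i ∈ {i : ℕ | τ ++ [i] ∈ T}, l (τ ++ [i])) ⊂ l τ) ∧
  (∀ τ ∈ T, ∀ i j : ℕ, τ ++ [i] ∈ T → τ ++ [j] ∈ T → i ≠ j →
    Disjoint (l (τ ++ [i])) (l (τ ++ [j])))


/-!
Every node `τ` owns a state lying in its label but in none of its children's labels (labels
strictly contain the union of the children's labels). Labels shrink along branches, so this
state is missing from the labels of all proper descendants of `τ`; and the labels of two nodes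
that fork below a common ancestor lie in the disjoint labels of two distinct children. Hence
distinct nodes own distinct states, and `T` injects into `Q`.
-/

theorem List.prefix_or_prefix_or_exists_fork {α : Type*} (τ σ : List α) :
    τ <+: σ ∨ σ <+: τ ∨
      ∃ ρ i j a b, i ≠ j ∧ τ = ρ ++ i :: a ∧ σ = ρ ++ j :: b := by
  induction τ generalizing σ with
  | nil => exact Or.inl List.nil_prefix
  | cons x τ ih =>
    cases σ with
    | nil => exact Or.inr (Or.inl List.nil_prefix)
    | cons y σ =>
      by_cases hxy : x = y
      · subst hxy
        rcases ih σ with h | h | ⟨ρ, i, j, a, b, hij, rfl, rfl⟩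
        · exact Or.inl (List.cons_prefix_cons.mpr ⟨rfl, h⟩)
        · exact Or.inr (Or.inl (List.cons_prefix_cons.mpr ⟨rfl, h⟩))
        · exact Or.inr (Or.inr ⟨x :: ρ, i, j, a, b, hij, rfl, rfl⟩)
      · exact Or.inr (Or.inr ⟨[], x, y, τ, σ, hxy, rfl, rfl⟩)

theorem PrefixClosed.label_append_subset {Q : Type*} {T : Set (List ℕ)} {l : List ℕ → Set Q}
    (hT : PrefixClosed T) (hchild : ∀ τ i, τ ++ [i] ∈ T → l (τ ++ [i]) ⊆ l τ)
    (τ ρ : List ℕ) (hρ : τ ++ ρ ∈ T) : l (τ ++ ρ) ⊆ l τ := by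
  induction ρ using List.reverseRecOn with
  | nil => simp
  | append_singleton ρ i ih =>
    rw [← List.append_assoc] at hρ ⊢
    exact (hchild _ _ hρ).trans (ih (hT _ _ (List.prefix_append _ _) hρ))

namespace HistoryTree

variable {Q : Type*} {T : Set (List ℕ)} {l : List ℕ → Set Q}

theorem prefixClosed (h : HistoryTree T l) : PrefixClosed T :=
  h.1.2.1

theorem label_child_subset (h : HistoryTree T l) {τ : List ℕ} {i : ℕ} (hi : τ ++ [i] ∈ T) :
    l (τ ++ [i]) ⊆ l τ :=
  (Set.subset_biUnion_of_mem (u := fun i => l (τ ++ [i]))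
    (show i ∈ {i : ℕ | τ ++ [i] ∈ T} from hi)).trans
    (h.2.2.2.1 τ (h.prefixClosed _ _ (List.prefix_append _ _) hi)).subset

theorem label_subset_child_label (h : HistoryTree T l) {τ a : List ℕ} {i : ℕ}
    (hτ : τ ++ i :: a ∈ T) : l (τ ++ i :: a) ⊆ l (τ ++ [i]) := by
  simpa using h.prefixClosed.label_append_subset (fun _ _ => h.label_child_subset) (τ ++ [i]) a
    (by simpa using hτ)

theorem exists_mem_label_notMem_child_label (h : HistoryTree T l) {τ : List ℕ} (hτ : τ ∈ T) :
    ∃ q ∈ l τ, ∀ i, τ ++ [i] ∈ T → q ∉ l (τ ++ [i]) := by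
  obtain ⟨q, hq, hq_children⟩ := Set.exists_of_ssubset (h.2.2.2.1 τ hτ)
  exact ⟨q, hq, fun i hi hqi => hq_children (Set.mem_biUnion (x := i) hi hqi)⟩

theorem disjoint_label_of_fork (h : HistoryTree T l) {ρ a b : List ℕ} {i j : ℕ} (hij : i ≠ j)
    (hτ : ρ ++ i :: a ∈ T) (hσ : ρ ++ j :: b ∈ T) :
    Disjoint (l (ρ ++ i :: a)) (l (ρ ++ j :: b)) := by
  have hi : ρ ++ [i] ∈ T := h.prefixClosed _ _ ⟨a, by simp⟩ hτ
  have hj : ρ ++ [j] ∈ T := h.prefixClosed _ _ ⟨b, by simp⟩ hσ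
  have hρ : ρ ∈ T := h.prefixClosed _ _ (List.prefix_append _ _) hi
  exact (h.2.2.2.2 ρ hρ i j hi hj hij).mono
    (h.label_subset_child_label hτ) (h.label_subset_child_label hσ)

theorem notMem_label_of_notMem_child_label (h : HistoryTree T l) {τ a : List ℕ} {i : ℕ} {q : Q}
    (hτ : τ ++ i :: a ∈ T) (hq : ∀ i, τ ++ [i] ∈ T → q ∉ l (τ ++ [i])) : q ∉ l (τ ++ i :: a) :=
  fun hqτ => hq i (h.prefixClosed _ _ ⟨a, by simp⟩ hτ) (h.label_subset_child_label hτ hqτ)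

theorem eq_of_mem_label_of_notMem_child_label (h : HistoryTree T l) {τ σ : List ℕ} {q : Q}
    (hτ : τ ∈ T) (hσ : σ ∈ T) (hqτ : q ∈ l τ) (hqσ : q ∈ l σ)
    (hτ_child : ∀ i, τ ++ [i] ∈ T → q ∉ l (τ ++ [i]))
    (hσ_child : ∀ i, σ ++ [i] ∈ T → q ∉ l (σ ++ [i])) : τ = σ := by
  rcases List.prefix_or_prefix_or_exists_fork τ σ with
    ⟨_ | ⟨i, a⟩, rfl⟩ | ⟨_ | ⟨i, a⟩, rfl⟩ | ⟨ρ, i, j, a, b, hij, rfl, rfl⟩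
  · simp
  · exact absurd hqσ (h.notMem_label_of_notMem_child_label hσ hτ_child)
  · simp
  · exact absurd hqτ (h.notMem_label_of_notMem_child_label hτ hσ_child)
  · exact absurd hqσ ((h.disjoint_label_of_fork hij hτ hσ).notMem_of_mem_left hqτ)

end HistoryTree

theorem stmt11 {Q : Type*} [Finite Q] (T : Set (List ℕ)) (l : List ℕ → Set Q)
    (h : HistoryTree T l) : T.ncard ≤ Nat.card Q := by
  choose f hf_mem hf_child using fun τ : T => h.exists_mem_label_notMem_child_label τ.2
  have hf_inj : Function.Injective f := fun τ σ hfeq =>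
    Subtype.ext (h.eq_of_mem_label_of_notMem_child_label τ.2 σ.2 (hf_mem τ) (hfeq ▸ hf_mem σ)
      (hf_child τ) (hfeq ▸ hf_child σ))
  calc T.ncard = Nat.card T := (Nat.card_coe_set_eq T).symm
    _ ≤ Nat.card Q := Nat.card_le_card_of_injective f hf_inj
end

section
/- If every run of a UCA A on a word w eventually reaches and stays at a constant odd rank in the tracked ranking sequence of an accepting run of the rank-based NBA C on w, then w ∈ L(A): no run of A on w takes rejecting transitions infinitely often. Combined with the breakpoint mechanism ensuring no run stays forever at an even rank in the obligation set O, this yields L(C) ⊆ L(A). -/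
theorem not_rejRun_of_rank_eventually_odd {A Q : Type*} {γ : Q → A → Set Q} {w : ℕ → A}
    {ρ : ℕ → Q} {rk : ℕ → Q → ℕ} {N c : ℕ} (hc : Odd c)
    (hconst : ∀ n ≥ N, rk n (ρ n) = c)
    (hdec : ∀ i, ρ (i + 1) ∈ γ (ρ i) (w i) →
      rk (i + 1) (ρ (i + 1)) ≤ 2 * (rk i (ρ i) / 2)) :
    ¬ RejRun γ w ρ := by
  intro hrej
  obtain ⟨i, hiN, hi⟩ := hrej N
  have hle : c ≤ 2 * (c / 2) := by
    simpa only [hconst i hiN, hconst (i + 1) (by omega)] using hdec i hi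
  have := Nat.two_mul_div_two_add_one_of_odd hc
  omega

/-- If every run of the UCA `A = (δ, γ)` on `w`, tracked through the ranking
sequence `rk` of an accepting run of the rank-based NBA `C`, eventually stays at a
constant odd rank, and ranks drop to at most the next lower even number on rejecting
transitions, then `w ∈ L(A)`: no run of `A` on `w` is rejecting. -/
theorem stmt17 {A Q : Type*} (δ γ : Q → A → Set Q) (q0 : Q) (w : ℕ → A)
    (rk : ℕ → Q → ℕ)
    (hodd : ∀ ρ : ℕ → Q, IsRun δ q0 w ρ →
      ∃ N c, Odd c ∧ ∀ n ≥ N, rk n (ρ n) = c)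
    (hdec : ∀ ρ : ℕ → Q, IsRun δ q0 w ρ → ∀ i,
      ρ (i + 1) ∈ γ (ρ i) (w i) →
        rk (i + 1) (ρ (i + 1)) ≤ 2 * (rk i (ρ i) / 2)) :
    ∀ ρ : ℕ → Q, IsRun δ q0 w ρ → ¬ RejRun γ w ρ := by
  intro ρ hρ
  obtain ⟨N, c, hc, hconst⟩ := hodd ρ hρ
  exact not_rejRun_of_rank_eventually_odd hc hconst (hdec ρ hρ)
end
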